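/- arXiv:1704.03462 — 4 statements merged into one kernel-verified Lean document; each statement's English description precedes it below -/
import Mathlib

section
/- The volume function V(b₁,b₂) = −9/((b₁ − 2b₂ − 3)(−2b₁ + b₂ − 3)(b₁ + b₂ − 3)) for C³/Z₃ (with b₃ = 3) attains its minimum over the interior region where all three linear factors keep the expression positive at b₁ = b₂ = 0, with minimum value 1/3. -/
/-- The volume function of `ℂ³/ℤ₃` (with `b₃ = 3`) attains its minimum `1/3` on
its positivity domain exactly at `b₁ = b₂ = 0`. -/
theorem volume_min_C3Z3 (b₁ b₂ : ℝ)
    (h₁ : 0 < 3 + 2 * b₂ - b₁) (h₂ : 0 < 3 + 2 * b₁ - b₂) (h₃ : 0 < 3 - b₁ - b₂) :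
    (1 : ℝ) / 3 ≤ 9 / ((3 + 2 * b₂ - b₁) * (3 + 2 * b₁ - b₂) * (3 - b₁ - b₂)) ∧
      (9 / ((3 + 2 * b₂ - b₁) * (3 + 2 * b₁ - b₂) * (3 - b₁ - b₂)) = 1 / 3 ↔
        b₁ = 0 ∧ b₂ = 0) := by
  have hP : 0 < (3 + 2 * b₂ - b₁) * (3 + 2 * b₁ - b₂) * (3 - b₁ - b₂) := by positivity
  have hle : (3 + 2 * b₂ - b₁) * (3 + 2 * b₁ - b₂) * (3 - b₁ - b₂) ≤ 27 := by
    nlinarith [sq_nonneg (b₁ - b₂), sq_nonneg (b₁ + b₂), sq_nonneg b₁, sq_nonneg b₂,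
      mul_pos h₁ h₂, mul_pos h₂ h₃, mul_pos h₁ h₃]
  constructor
  · rw [div_le_div_iff₀ (by norm_num) hP]
    linarith
  · constructor
    · intro heq
      have hP27 : (3 + 2 * b₂ - b₁) * (3 + 2 * b₁ - b₂) * (3 - b₁ - b₂) = 27 := by
        field_simp at heq; linarith
      constructor
      · nlinarith [sq_nonneg (b₁ - b₂), sq_nonneg (b₁ + b₂), sq_nonneg b₁, sq_nonneg b₂,
          mul_pos h₁ h₂, mul_pos h₂ h₃, mul_pos h₁ h₃,
          sq_nonneg ((3 + 2 * b₂ - b₁) * (3 + 2 * b₁ - b₂) - (3 + 2 * b₁ - b₂) * (3 - b₁ - b₂)),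
          sq_nonneg ((3 + 2 * b₂ - b₁) * (3 + 2 * b₁ - b₂) - (3 + 2 * b₂ - b₁) * (3 - b₁ - b₂)),
          sq_nonneg ((3 + 2 * b₂ - b₁) * (3 - b₁ - b₂) - (3 + 2 * b₁ - b₂) * (3 - b₁ - b₂))]
      · nlinarith [sq_nonneg (b₁ - b₂), sq_nonneg (b₁ + b₂), sq_nonneg b₁, sq_nonneg b₂,
          mul_pos h₁ h₂, mul_pos h₂ h₃, mul_pos h₁ h₃,
          sq_nonneg ((3 + 2 * b₂ - b₁) * (3 + 2 * b₁ - b₂) - (3 + 2 * b₁ - b₂) * (3 - b₁ - b₂)),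
          sq_nonneg ((3 + 2 * b₂ - b₁) * (3 + 2 * b₁ - b₂) - (3 + 2 * b₂ - b₁) * (3 - b₁ - b₂)),
          sq_nonneg ((3 + 2 * b₂ - b₁) * (3 - b₁ - b₂) - (3 + 2 * b₁ - b₂) * (3 - b₁ - b₂))]
    · rintro ⟨rfl, rfl⟩
      norm_num
end

section
/- The volume function V(b₁,b₂) = −6(b₁² + b₁b₂ + b₂² − 27)/((b₁−3)(b₁+3)(3−b₂)(b₂+3)(b₁+b₂−3)(b₁+b₂+3)) for the cone over dP₃ attains its minimum on the interior hexagon {|b₁|<3, |b₂|<3, |b₁+b₂|<3} at b₁ = b₂ = 0 with minimum value 2/9. -/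
/-- The volume function of the cone over `dP₃` (with `b₃ = 3`) attains its
minimum `2/9` on the open hexagon `{|b₁| < 3, |b₂| < 3, |b₁+b₂| < 3}` exactly at
`b₁ = b₂ = 0`. -/
theorem volume_min_dP3 (b₁ b₂ : ℝ)
    (h₁ : |b₁| < 3) (h₂ : |b₂| < 3) (h₃ : |b₁ + b₂| < 3) :
    (2 : ℝ) / 9 ≤
        6 * (27 - b₁ ^ 2 - b₁ * b₂ - b₂ ^ 2) /
          ((9 - b₁ ^ 2) * (9 - b₂ ^ 2) * (9 - (b₁ + b₂) ^ 2)) ∧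
      (6 * (27 - b₁ ^ 2 - b₁ * b₂ - b₂ ^ 2) /
          ((9 - b₁ ^ 2) * (9 - b₂ ^ 2) * (9 - (b₁ + b₂) ^ 2)) = 2 / 9 ↔
        b₁ = 0 ∧ b₂ = 0) := by
  have h1 : b₁ ^ 2 < 9 := by
    have := abs_lt.mp h₁; nlinarith
  have h2 : b₂ ^ 2 < 9 := by
    have := abs_lt.mp h₂; nlinarith
  have h3 : (b₁ + b₂) ^ 2 < 9 := by
    have := abs_lt.mp h₃; nlinarith
  have hq0 : 0 ≤ b₁ ^ 2 + b₁ * b₂ + b₂ ^ 2 := by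
    nlinarith [sq_nonneg (b₁ + b₂), sq_nonneg b₁, sq_nonneg b₂]
  have hq15 : b₁ ^ 2 + b₁ * b₂ + b₂ ^ 2 < 15 := by
    nlinarith [sq_nonneg (b₁ - b₂)]
  have hD : 0 < (9 - b₁ ^ 2) * (9 - b₂ ^ 2) * (9 - (b₁ + b₂) ^ 2) :=
    mul_pos (mul_pos (by linarith) (by linarith)) (by linarith)
  have hkey : 27 * (27 - b₁ ^ 2 - b₁ * b₂ - b₂ ^ 2)
        - (9 - b₁ ^ 2) * (9 - b₂ ^ 2) * (9 - (b₁ + b₂) ^ 2)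
      = 9 * (b₁ ^ 2 + b₁ * b₂ + b₂ ^ 2) * (15 - (b₁ ^ 2 + b₁ * b₂ + b₂ ^ 2))
        + (b₁ * b₂ * (b₁ + b₂)) ^ 2 := by ring
  have hprod : 0 ≤ 9 * (b₁ ^ 2 + b₁ * b₂ + b₂ ^ 2) * (15 - (b₁ ^ 2 + b₁ * b₂ + b₂ ^ 2)) :=
    mul_nonneg (mul_nonneg (by norm_num) hq0) (by linarith)
  have hP : 0 ≤ 27 * (27 - b₁ ^ 2 - b₁ * b₂ - b₂ ^ 2)
      - (9 - b₁ ^ 2) * (9 - b₂ ^ 2) * (9 - (b₁ + b₂) ^ 2) := by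
    rw [hkey]
    have := sq_nonneg (b₁ * b₂ * (b₁ + b₂))
    linarith
  constructor
  · rw [le_div_iff₀ hD]
    linarith
  · rw [div_eq_iff hD.ne']
    constructor
    · intro he
      have hP0 : 9 * (b₁ ^ 2 + b₁ * b₂ + b₂ ^ 2) * (15 - (b₁ ^ 2 + b₁ * b₂ + b₂ ^ 2))
          + (b₁ * b₂ * (b₁ + b₂)) ^ 2 = 0 := by
        rw [← hkey]; nlinarith
      have hq : b₁ ^ 2 + b₁ * b₂ + b₂ ^ 2 = 0 := by
        nlinarith [sq_nonneg (b₁ * b₂ * (b₁ + b₂))]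
      have hb1 : b₁ ^ 2 ≤ 0 := by
        linarith [sq_nonneg (b₁ + b₂), sq_nonneg b₂, sq_nonneg b₁,
          (by ring : (b₁ + b₂) ^ 2 = b₁ ^ 2 + 2 * (b₁ * b₂) + b₂ ^ 2)]
      have hb2 : b₂ ^ 2 ≤ 0 := by
        linarith [sq_nonneg (b₁ + b₂), sq_nonneg b₂, sq_nonneg b₁,
          (by ring : (b₁ + b₂) ^ 2 = b₁ ^ 2 + 2 * (b₁ * b₂) + b₂ ^ 2)]
      exact ⟨pow_eq_zero_iff two_ne_zero |>.mp (le_antisymm hb1 (sq_nonneg b₁)),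
        pow_eq_zero_iff two_ne_zero |>.mp (le_antisymm hb2 (sq_nonneg b₂))⟩
    · rintro ⟨rfl, rfl⟩
      norm_num
end

section
/- The volume function V(b₁,b₂) = 8/((3 + 3b₂ − b₁)(3 − b₂ + b₁)(3 − b₁ − b₂)) for C³/Z₄ attains its minimum on its positivity domain at (b₁, b₂) = (−1, 0) with minimum value 1/4. -/
/-! The three linear factors `x = 3 + 3b₂ - b₁`, `y = b₁ - b₂ + 3`, `z = 3 - b₁ - b₂` satisfy
`x + 2y + z = 12`, so AM-GM applied to `x, 2y, z` gives `2xyz ≤ 4³`, i.e. `xyz ≤ 32`, with equality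
exactly when `x = 2y = z = 4`, which is the point `(b₁, b₂) = (-1, 0)`. -/

theorem add_add_pow_three_sub_mul_mul (p q r : ℝ) :
    (p + q + r) ^ 3 - 27 * (p * q * r) =
      (p + q + r) * ((p - q) ^ 2 + (q - r) ^ 2 + (r - p) ^ 2) / 2 +
        3 * (p * (q - r) ^ 2 + q * (r - p) ^ 2 + r * (p - q) ^ 2) := by
  ring

section AMGM

variable {p q r : ℝ} (hp : 0 ≤ p) (hq : 0 ≤ q) (hr : 0 ≤ r)
include hp hq hr

theorem mul_mul_le_add_add_pow_three : 27 * (p * q * r) ≤ (p + q + r) ^ 3 := by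
  have h := add_add_pow_three_sub_mul_mul p q r
  have : 0 ≤ (p + q + r) * ((p - q) ^ 2 + (q - r) ^ 2 + (r - p) ^ 2) := by positivity
  have : 0 ≤ p * (q - r) ^ 2 + q * (r - p) ^ 2 + r * (p - q) ^ 2 := by positivity
  linarith

theorem eq_and_eq_of_mul_mul_eq_add_add_pow_three (h : 27 * (p * q * r) = (p + q + r) ^ 3) :
    p = q ∧ q = r := by
  have hid := add_add_pow_three_sub_mul_mul p q r
  have hsq : 0 ≤ (p - q) ^ 2 + (q - r) ^ 2 + (r - p) ^ 2 := by positivity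
  have hw : 0 ≤ p * (q - r) ^ 2 + q * (r - p) ^ 2 + r * (p - q) ^ 2 := by positivity
  have hzero : (p + q + r) * ((p - q) ^ 2 + (q - r) ^ 2 + (r - p) ^ 2) = 0 := by
    nlinarith [mul_nonneg (add_nonneg (add_nonneg hp hq) hr) hsq]
  rcases mul_eq_zero.mp hzero with hs | hs
  · exact ⟨by linarith, by linarith⟩
  · exact ⟨by nlinarith [sq_nonneg (p - q), sq_nonneg (q - r), sq_nonneg (r - p)],
      by nlinarith [sq_nonneg (p - q), sq_nonneg (q - r), sq_nonneg (r - p)]⟩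

end AMGM

section Constrained

variable {x y z : ℝ} (hx : 0 ≤ x) (hy : 0 ≤ y) (hz : 0 ≤ z) (hsum : x + 2 * y + z = 12)
include hx hy hz hsum

theorem mul_mul_le_thirtyTwo : x * y * z ≤ 32 := by
  have := mul_mul_le_add_add_pow_three hx (by positivity : 0 ≤ 2 * y) hz
  rw [hsum] at this
  linarith

theorem mul_mul_eq_thirtyTwo_iff : x * y * z = 32 ↔ x = 4 ∧ y = 2 ∧ z = 4 := by
  constructor
  · intro h
    obtain ⟨hxy, hyz⟩ := eq_and_eq_of_mul_mul_eq_add_add_pow_three hx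
      (by positivity : 0 ≤ 2 * y) hz (by rw [hsum]; linarith)
    exact ⟨by linarith, by linarith, by linarith⟩
  · rintro ⟨rfl, rfl, rfl⟩
    norm_num

end Constrained

/-- The volume function of `ℂ³/ℤ₄` (with `b₃ = 3`) attains its minimum `1/4` on
its positivity domain exactly at `(b₁, b₂) = (−1, 0)`. -/
theorem volume_min_C3Z4 (b₁ b₂ : ℝ)
    (h₁ : 0 < 3 + 3 * b₂ - b₁) (h₂ : 0 < b₁ - b₂ + 3) (h₃ : 0 < 3 - b₁ - b₂) :
    (1 : ℝ) / 4 ≤ 8 / ((3 + 3 * b₂ - b₁) * (b₁ - b₂ + 3) * (3 - b₁ - b₂)) ∧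
      (8 / ((3 + 3 * b₂ - b₁) * (b₁ - b₂ + 3) * (3 - b₁ - b₂)) = 1 / 4 ↔
        b₁ = -1 ∧ b₂ = 0) := by
  have hsum : (3 + 3 * b₂ - b₁) + 2 * (b₁ - b₂ + 3) + (3 - b₁ - b₂) = 12 := by ring
  have hpos : 0 < (3 + 3 * b₂ - b₁) * (b₁ - b₂ + 3) * (3 - b₁ - b₂) := by positivity
  have hle := mul_mul_le_thirtyTwo h₁.le h₂.le h₃.le hsum
  have heq := mul_mul_eq_thirtyTwo_iff h₁.le h₂.le h₃.le hsum
  refine ⟨by rw [le_div_iff₀ hpos]; linarith, ?_⟩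
  rw [div_eq_iff hpos.ne', eq_comm]
  constructor
  · intro h
    obtain ⟨hx, hy, -⟩ := heq.mp (by linarith)
    exact ⟨by linarith, by linarith⟩
  · rintro ⟨rfl, rfl⟩
    norm_num
end

section
/- For the cone over dP₁ (toric diagram #3), the minimized volume of the Sasaki–Einstein base is (46 + 13√13)/324, attained at Reeb vector (b₁, b₂) = (4 − √13, 0). -/
/-- The volume function of the cone over `dP₁` (with `b₃ = 3`). -/
noncomputable def VdP1 (b₁ b₂ : ℝ) : ℝ :=
  2 * (12 - 2 * b₁ - b₂) /
    ((3 - b₁) * (b₁ - b₂ + 3) * (3 - b₁ - b₂) * (b₁ + 2 * b₂ + 3))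

lemma dP1_stepA (b₁ b₂ : ℝ) (h1 : 0 < 3 - b₁) (h3 : 0 < 3 - b₁ - b₂) :
    16 * ((3 - b₁) * (b₁ - b₂ + 3) * (3 - b₁ - b₂) * (b₁ + 2 * b₂ + 3)) ≤
      (6 - 2 * b₁ - b₂) ^ 2 * (6 + 2 * b₁ + b₂) ^ 2 := by
  nlinarith [mul_nonneg (sq_nonneg b₂) (mul_pos h1 h3).le,
    sq_nonneg (b₂ * (6 + 2 * b₁ + b₂))]

lemma dP1_stepB (s p : ℝ) (hs : s ^ 2 = 13) (hs1 : 7 / 2 < s) (hs2 : s < 4)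
    (hp : 0 < p) (hp2 : p < 12) :
    (46 + 13 * s) * (p ^ 2 * (12 - p) ^ 2) ≤ 10368 * (6 + p) := by
  have hQ : 0 ≤ 120 * s - 408 + p * (16 - 4 * s) + p * (12 - p) := by
    nlinarith [mul_nonneg hp.le (by linarith : (0:ℝ) ≤ 16 - 4 * s),
      mul_pos hp (by linarith : (0:ℝ) < 12 - p)]
  have key : 10368 * (6 + p) - (46 + 13 * s) * (p ^ 2 * (12 - p) ^ 2) =
      (46 + 13 * s) * (p - 2 * s + 2) ^ 2 *
        (120 * s - 408 + p * (16 - 4 * s) + p * (12 - p)) := by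
    linear_combination (-10560 - 6176 * p - 552 * p ^ 2 + 11616 * s + 5104 * s * p
      - 156 * s * p ^ 2 - 6240 * s ^ 2 + 208 * s ^ 2 * p) * hs
  nlinarith [mul_nonneg (mul_nonneg (by linarith : (0:ℝ) ≤ 46 + 13 * s)
    (sq_nonneg (p - 2 * s + 2))) hQ]

/-- For the cone over `dP₁`, the minimized volume is `(46 + 13√13)/324`, attained
at `(b₁, b₂) = (4 − √13, 0)`. -/
theorem volume_min_dP1 :
    (∀ b₁ b₂ : ℝ, 0 < 3 - b₁ → 0 < b₁ - b₂ + 3 → 0 < 3 - b₁ - b₂ →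
      0 < b₁ + 2 * b₂ + 3 →
      (46 + 13 * Real.sqrt 13) / 324 ≤ VdP1 b₁ b₂) ∧
    VdP1 (4 - Real.sqrt 13) 0 = (46 + 13 * Real.sqrt 13) / 324 := by
  set s := Real.sqrt 13 with hsdef
  have hs : s ^ 2 = 13 := Real.sq_sqrt (by norm_num)
  have hs0 : 0 ≤ s := Real.sqrt_nonneg 13
  have hs1 : 7 / 2 < s := by nlinarith
  have hs2 : s < 4 := by nlinarith
  constructor
  · intro b₁ b₂ h1 h2 h3 h4
    have hD : 0 < (3 - b₁) * (b₁ - b₂ + 3) * (3 - b₁ - b₂) * (b₁ + 2 * b₂ + 3) :=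
      mul_pos (mul_pos (mul_pos h1 h2) h3) h4
    rw [VdP1, div_le_div_iff₀ (by norm_num) hD]
    have hA := dP1_stepA b₁ b₂ h1 h3
    have hB := dP1_stepB s (6 - 2 * b₁ - b₂) hs hs1 hs2 (by linarith) (by linarith)
    have hc : (0:ℝ) ≤ 46 + 13 * s := by linarith
    have hA' := mul_le_mul_of_nonneg_left hA hc
    nlinarith [hA', hB]
  · rw [VdP1]
    have hd : (3 - (4 - s)) * ((4 - s) - 0 + 3) * (3 - (4 - s) - 0) * ((4 - s) + 2 * 0 + 3)
        = 1232 - 320 * s := by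
      linear_combination (s ^ 2 - 16 * s + 91) * hs
    rw [hd, div_eq_div_iff (by nlinarith) (by norm_num)]
    linear_combination (4160 : ℝ) * hs
end
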